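/- Let e₀ : ℝ² → ℝ³ × ℂ be the map e₀(x, y) = ((sin(πx)·cos(2πy), cos(πx)·cos(2πy), sin(2πy)), exp(2πix)), and let K denote the quotient topological space of ℝ² by the equivalence relation whose classes are the orbits of the group generated by (x, y) ↦ (x, y + 1) and (x, y) ↦ (x + 1, 1/2 − y). Then K is compact, and the map ē₀ : K → S² × S¹ induced by e₀ on the quotient is well defined, continuous, injective, and is a topological embedding onto its image K₀ = e₀(ℝ²). -/

import Mathlib

open Real

/-- The explicit parametrization of the Klein bottle inside `S² × S¹` from the paper:
`e₀(x, y) = ((sin(πx)·cos(2πy), cos(πx)·cos(2πy), sin(2πy)), exp(2πix))`. -/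
noncomputable def e₀ : ℝ × ℝ → EuclideanSpace ℝ (Fin 3) × ℂ := fun p =>
  ((WithLp.equiv 2 (Fin 3 → ℝ)).symm
      ![Real.sin (π * p.1) * Real.cos (2 * π * p.2),
        Real.cos (π * p.1) * Real.cos (2 * π * p.2),
        Real.sin (2 * π * p.2)],
    Complex.exp (2 * π * p.1 * Complex.I))

/-- The relation on `ℝ²` generated by the two deck transformations
`(x, y) ↦ (x, y + 1)` and `(x, y) ↦ (x + 1, 1/2 − y)`. Its equivalence closure
(as used by `Quot`) has the orbits of the group generated by these two
homeomorphisms as its classes. -/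
def kleinRel (p q : ℝ × ℝ) : Prop :=
  q = (p.1, p.2 + 1) ∨ q = (p.1 + 1, 1 / 2 - p.2)

/-- The Klein bottle: the quotient of `ℝ²` by the orbits of the group generated by
`(x, y) ↦ (x, y + 1)` and `(x, y) ↦ (x + 1, 1/2 − y)`. -/
def KleinBottle : Type := Quot kleinRel

instance : TopologicalSpace KleinBottle := instTopologicalSpaceQuot

/-!
Both generators fix `e₀`, so it descends to `K`. Since the flip applied twice is
`(x, y) ↦ (x + 2, y)`, every point of `K` has a representative in `[0, 2] × [0, 1]`, so `K` is
compact. If `e₀ p = e₀ q`, the `S¹` component gives `p.1 = q.1 + n` with `n ∈ ℤ`; applying the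
flip `n` times moves `q` within its class to a point with first coordinate `p.1`. With equal first
coordinates, the first two `S²` components determine `cos 2πy` (as `sin² + cos² = 1`), the third
gives `sin 2πy`, so the second coordinates differ by an integer. A continuous injection of a
compact space into a Hausdorff space is a closed embedding.
-/

open Function Set

theorem Complex.exp_two_pi_mul_I_eq_iff {s t : ℝ} :
    Complex.exp (2 * π * s * Complex.I) = Complex.exp (2 * π * t * Complex.I) ↔
      ∃ n : ℤ, s = t + n := by
  rw [Complex.exp_eq_exp_iff_exists_int]
  refine exists_congr fun n => ?_
  rw [show 2 * π * t * Complex.I + n * (2 * π * Complex.I)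
      = 2 * π * ((t + n : ℝ) : ℂ) * Complex.I by push_cast; ring,
    mul_left_inj' Complex.I_ne_zero, mul_right_inj' (by exact_mod_cast two_pi_pos.ne'),
    Complex.ofReal_inj]

theorem Real.exists_int_eq_add_of_cos_eq_of_sin_eq {s t : ℝ}
    (hcos : cos (2 * π * s) = cos (2 * π * t)) (hsin : sin (2 * π * s) = sin (2 * π * t)) :
    ∃ n : ℤ, s = t + n := by
  refine Complex.exp_two_pi_mul_I_eq_iff.mp ?_
  simp only [← Complex.ofReal_ofNat, ← Complex.ofReal_mul, Complex.exp_mul_I,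
    ← Complex.ofReal_cos, ← Complex.ofReal_sin, hcos, hsin]

theorem continuous_e₀ : Continuous e₀ := by
  unfold e₀
  exact .prodMk ((PiLp.continuous_toLp 2 _).comp (by fun_prop)) (by fun_prop)

theorem e₀_eq_e₀_iff {p q : ℝ × ℝ} :
    e₀ p = e₀ q ↔
      (sin (π * p.1) * cos (2 * π * p.2) = sin (π * q.1) * cos (2 * π * q.2) ∧
        cos (π * p.1) * cos (2 * π * p.2) = cos (π * q.1) * cos (2 * π * q.2) ∧
          sin (2 * π * p.2) = sin (2 * π * q.2)) ∧
      Complex.exp (2 * π * p.1 * Complex.I) = Complex.exp (2 * π * q.1 * Complex.I) := by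
  simp [e₀]

theorem norm_e₀_fst (p : ℝ × ℝ) : ‖(e₀ p).1‖ = 1 := by
  rw [EuclideanSpace.norm_eq, Real.sqrt_eq_one, Fin.sum_univ_three]
  simp only [e₀, WithLp.equiv_symm_apply, PiLp.toLp_apply, Matrix.cons_val_zero,
    Matrix.cons_val_one, Matrix.cons_val, Real.norm_eq_abs, sq_abs]
  linear_combination cos (2 * π * p.2) ^ 2 * sin_sq_add_cos_sq (π * p.1) +
    sin_sq_add_cos_sq (2 * π * p.2)

theorem norm_e₀_snd (p : ℝ × ℝ) : ‖(e₀ p).2‖ = 1 := by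
  simpa [e₀, mul_comm] using Complex.norm_exp_ofReal_mul_I (2 * π * p.1)

namespace KleinBottle

local notation "mk" => Quot.mk kleinRel

theorem mk_flip (x y : ℝ) : mk (x + 1, 1 / 2 - y) = mk (x, y) :=
  (Quot.sound (show kleinRel (x, y) _ from Or.inr rfl)).symm

theorem periodic_mk_snd (x : ℝ) : Periodic (fun y => mk (x, y)) 1 := fun y =>
  (Quot.sound (show kleinRel (x, y) _ from Or.inl rfl)).symm

theorem periodic_mk_fst (y : ℝ) : Periodic (fun x => mk (x, y)) 2 := fun x => by
  show mk (x + 2, y) = mk (x, y)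
  rw [← mk_flip x y, ← mk_flip (x + 1), sub_sub_cancel, add_assoc, one_add_one_eq_two]

theorem exists_mk_eq_of_mem_Icc (p : ℝ × ℝ) :
    ∃ q ∈ Icc (0 : ℝ) 2 ×ˢ Icc (0 : ℝ) 1, mk q = mk p := by
  obtain ⟨x, hx, hpx⟩ := (periodic_mk_fst p.2).exists_mem_Ico₀ two_pos p.1
  obtain ⟨y, hy, hxy⟩ := (periodic_mk_snd x).exists_mem_Ico₀ one_pos p.2
  exact ⟨(x, y), ⟨Ico_subset_Icc_self hx, Ico_subset_Icc_self hy⟩, (hpx.trans hxy).symm⟩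

instance : CompactSpace KleinBottle where
  isCompact_univ := by
    have hcover : mk '' (Icc (0 : ℝ) 2 ×ˢ Icc (0 : ℝ) 1) = univ :=
      eq_univ_of_forall fun z => Quot.ind exists_mk_eq_of_mem_Icc z
    exact hcover ▸ (isCompact_Icc.prod isCompact_Icc).image continuous_quot_mk

theorem exists_mk_eq_and_fst_eq (q : ℝ × ℝ) (n : ℤ) : ∃ q', q'.1 = q.1 + n ∧ mk q' = mk q := by
  obtain ⟨k, rfl | rfl⟩ := n.even_or_odd'
  · exact ⟨(q.1 + k * 2, q.2), by push_cast; ring, (periodic_mk_fst q.2).int_mul k q.1⟩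
  · exact ⟨(q.1 + 1 + k * 2, 1 / 2 - q.2), by push_cast; ring,
      ((periodic_mk_fst _).int_mul k _).trans (mk_flip q.1 q.2)⟩

theorem e₀_eq_of_kleinRel (p q : ℝ × ℝ) (h : kleinRel p q) : e₀ p = e₀ q := by
  obtain ⟨x, y⟩ := p
  rcases h with rfl | rfl
  · simp [e₀, mul_add, cos_add_two_pi, sin_add_two_pi]
  · have hx : π * (x + 1) = π * x + π := by ring
    have hy : 2 * π * (1 / 2 - y) = π - 2 * π * y := by ring
    have hexp : (2 : ℂ) * π * ((x + 1 : ℝ) : ℂ) * Complex.I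
        = 2 * π * x * Complex.I + 2 * π * Complex.I := by push_cast; ring
    simp only [e₀, hx, hy, hexp, sin_add_pi, cos_add_pi, sin_pi_sub, cos_pi_sub,
      Complex.exp_add, Complex.exp_two_pi_mul_I, mul_one, neg_mul_neg]

noncomputable def e₀Bar : KleinBottle → EuclideanSpace ℝ (Fin 3) × ℂ :=
  Quot.lift e₀ e₀_eq_of_kleinRel

theorem e₀Bar_mk (p : ℝ × ℝ) : e₀Bar (mk p) = e₀ p := rfl

theorem continuous_e₀Bar : Continuous e₀Bar := continuous_quot_lift _ continuous_e₀

theorem mk_eq_mk_of_e₀_eq_of_fst_eq {p q : ℝ × ℝ} (hfst : p.1 = q.1) (h : e₀ p = e₀ q) :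
    mk p = mk q := by
  obtain ⟨x, y⟩ := p
  obtain ⟨_, y'⟩ := q
  subst hfst
  obtain ⟨⟨h₁, h₂, hsin⟩, -⟩ := e₀_eq_e₀_iff.mp h
  have hcos : cos (2 * π * y) = cos (2 * π * y') := by
    linear_combination sin (π * x) * h₁ + cos (π * x) * h₂ -
      (cos (2 * π * y) - cos (2 * π * y')) * sin_sq_add_cos_sq (π * x)
  obtain ⟨n, rfl⟩ := exists_int_eq_add_of_cos_eq_of_sin_eq hcos hsin
  simpa using (periodic_mk_snd x).int_mul n y'

theorem injective_e₀Bar : Injective e₀Bar := by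
  rintro ⟨p⟩ ⟨q⟩ h
  obtain ⟨n, hn⟩ := Complex.exp_two_pi_mul_I_eq_iff.mp (e₀_eq_e₀_iff.mp h).2
  obtain ⟨q', hq'₁, hq'⟩ := exists_mk_eq_and_fst_eq q n
  rw [← hq']
  exact mk_eq_mk_of_e₀_eq_of_fst_eq (hn.trans hq'₁.symm) (h.trans (congrArg e₀Bar hq').symm)

end KleinBottle

theorem klein_bottle_compact_and_e0_descends_to_embedding :
    CompactSpace KleinBottle ∧
    ∃ ebar : KleinBottle → EuclideanSpace ℝ (Fin 3) × ℂ,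
      (∀ p : ℝ × ℝ, ebar (Quot.mk kleinRel p) = e₀ p) ∧
      (∀ q : KleinBottle, ‖(ebar q).1‖ = 1 ∧ ‖(ebar q).2‖ = 1) ∧
      Continuous ebar ∧ Function.Injective ebar ∧ Topology.IsEmbedding ebar ∧
      Set.range ebar = e₀ '' Set.univ := by
  open KleinBottle in
  refine ⟨inferInstance, e₀Bar, e₀Bar_mk, ?_, continuous_e₀Bar, injective_e₀Bar,
    (continuous_e₀Bar.isClosedEmbedding injective_e₀Bar).isEmbedding, ?_⟩
  · rintro ⟨p⟩
    exact ⟨norm_e₀_fst p, norm_e₀_snd p⟩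
  · rw [image_univ]
    exact range_quot_lift _
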